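/- For n > 0, the integral Z₁(n) = ∫_{ℝ²} |w1|·exp(-n·w1^2·w2^2)·(1/(2π))·exp(-(w1^2+w2^2)/2) dw1 dw2 has the exact asymptotic Z₁(n) ~ (1/√2)·n^{-1/2} as n → ∞; more precisely, n^{1/2}·Z₁(n) → 1/√2 as n → ∞. -/
import Mathlib

open Real MeasureTheory Filter Topology

/-- Weighted partition function with weight `|w1|` for `f(w1,w2) = w1^2 w2^2`. -/
noncomputable def Z1a (n : ℝ) : ℝ :=
  ∫ w1 : ℝ, ∫ w2 : ℝ,
    |w1| * Real.exp (-(n * (w1 ^ 2 * w2 ^ 2))) *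
      (1 / (2 * π) * Real.exp (-(w1 ^ 2 + w2 ^ 2) / 2))

lemma inner_eq (n w1 : ℝ) :
    (∫ w2 : ℝ, |w1| * Real.exp (-(n * (w1 ^ 2 * w2 ^ 2))) *
      (1 / (2 * π) * Real.exp (-(w1 ^ 2 + w2 ^ 2) / 2)))
    = |w1| * (1 / (2 * π)) * Real.exp (-(w1 ^ 2) / 2) *
        Real.sqrt (π / (n * w1 ^ 2 + 1/2)) := by
  have h : ∀ w2 : ℝ, |w1| * Real.exp (-(n * (w1 ^ 2 * w2 ^ 2))) *
      (1 / (2 * π) * Real.exp (-(w1 ^ 2 + w2 ^ 2) / 2))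
      = (|w1| * (1 / (2 * π)) * Real.exp (-(w1 ^ 2) / 2)) *
        Real.exp (-(n * w1 ^ 2 + 1/2) * w2 ^ 2) := by
    intro w2
    calc |w1| * Real.exp (-(n * (w1 ^ 2 * w2 ^ 2))) *
        (1 / (2 * π) * Real.exp (-(w1 ^ 2 + w2 ^ 2) / 2))
        = |w1| * (1 / (2 * π)) * (Real.exp (-(n * (w1 ^ 2 * w2 ^ 2))) *
            Real.exp (-(w1 ^ 2 + w2 ^ 2) / 2)) := by ring
      _ = |w1| * (1 / (2 * π)) *
            Real.exp (-(n * (w1 ^ 2 * w2 ^ 2)) + -(w1 ^ 2 + w2 ^ 2) / 2) := by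
            rw [← Real.exp_add]
      _ = |w1| * (1 / (2 * π)) *
            Real.exp (-(w1 ^ 2) / 2 + -(n * w1 ^ 2 + 1/2) * w2 ^ 2) := by
            rw [show -(n * (w1 ^ 2 * w2 ^ 2)) + -(w1 ^ 2 + w2 ^ 2) / 2
              = -(w1 ^ 2) / 2 + -(n * w1 ^ 2 + 1/2) * w2 ^ 2 by ring]
      _ = _ := by rw [Real.exp_add]; ring
  simp_rw [h]
  rw [MeasureTheory.integral_const_mul, integral_gaussian]

lemma Z1a_eq (n : ℝ) :
    Z1a n = ∫ w : ℝ, |w| * (1 / (2 * π)) * Real.exp (-(w ^ 2) / 2) *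
      Real.sqrt (π / (n * w ^ 2 + 1/2)) := by
  unfold Z1a
  congr 1
  funext w1
  exact inner_eq n w1

set_option maxHeartbeats 1000000 in
/-- `n^(1/2) · Z₁(n) → 1/√2` as `n → ∞`. -/
theorem Z1a_asymptotic :
    Tendsto (fun n : ℝ => n ^ (1/2 : ℝ) * Z1a n) atTop (nhds (1 / Real.sqrt 2)) := by
  set F : ℝ → ℝ → ℝ := fun n w =>
    n ^ (1/2 : ℝ) * (|w| * (1 / (2 * π)) * Real.exp (-(w ^ 2) / 2) *
      Real.sqrt (π / (n * w ^ 2 + 1/2))) with hF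
  set f : ℝ → ℝ := fun w => Real.exp (-(w ^ 2) / 2) * Real.sqrt π / (2 * π) with hf
  have hne : ∀ᵐ w : ℝ, w ≠ (0:ℝ) := by
    rw [ae_iff]
    have h0 : {a : ℝ | ¬ a ≠ 0} = {0} := by ext x; simp
    rw [h0]; exact measure_singleton 0
  -- limit of integrals by dominated convergence
  have key : Tendsto (fun n => ∫ w : ℝ, F n w) atTop (𝓝 (∫ w : ℝ, f w)) := by
    apply tendsto_integral_filter_of_dominated_convergence
      (bound := fun w => Real.sqrt π * (1 / (2 * π)) * Real.exp (-(w ^ 2) / 2))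
    · filter_upwards [eventually_ge_atTop (1:ℝ)] with n hn
      apply Continuous.aestronglyMeasurable
      simp only [hF]
      have hden : Continuous fun w : ℝ => n * w ^ 2 + 1/2 :=
        (continuous_const.mul (continuous_pow 2)).add continuous_const
      have harg : Continuous fun w : ℝ => -(w ^ 2) / 2 :=
        ((continuous_pow 2).neg).div_const 2
      exact continuous_const.mul
        (((continuous_abs.mul continuous_const).mul (Real.continuous_exp.comp harg)).mul
          (Real.continuous_sqrt.comp (continuous_const.div hden fun w => by positivity)))
    · filter_upwards [eventually_ge_atTop (1:ℝ)] with n hn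
      filter_upwards with w
      have hn0 : (0:ℝ) < n := by linarith
      have hden : (0:ℝ) < n * w ^ 2 + 1/2 := by positivity
      have h1 : n ^ (1/2 : ℝ) * |w| * Real.sqrt (π / (n * w ^ 2 + 1/2))
          = Real.sqrt (n * w ^ 2 * (π / (n * w ^ 2 + 1/2))) := by
        rw [← Real.sqrt_eq_rpow, ← Real.sqrt_sq_eq_abs, ← Real.sqrt_mul hn0.le,
          ← Real.sqrt_mul (by positivity)]
      have h2 : n * w ^ 2 * (π / (n * w ^ 2 + 1/2)) ≤ π := by
        rw [mul_div_assoc', div_le_iff₀ hden]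
        nlinarith [pi_pos]
      have h3 : n ^ (1/2 : ℝ) * |w| * Real.sqrt (π / (n * w ^ 2 + 1/2)) ≤ Real.sqrt π := by
        rw [h1]; exact Real.sqrt_le_sqrt h2
      have hFnn : 0 ≤ F n w := by
        simp only [hF]; positivity
      rw [Real.norm_eq_abs, abs_of_nonneg hFnn]
      simp only [hF]
      calc n ^ (1/2 : ℝ) * (|w| * (1 / (2 * π)) * Real.exp (-(w ^ 2) / 2) *
            Real.sqrt (π / (n * w ^ 2 + 1/2)))
          = (n ^ (1/2 : ℝ) * |w| * Real.sqrt (π / (n * w ^ 2 + 1/2))) *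
            ((1 / (2 * π)) * Real.exp (-(w ^ 2) / 2)) := by ring
        _ ≤ Real.sqrt π * ((1 / (2 * π)) * Real.exp (-(w ^ 2) / 2)) := by
            apply mul_le_mul_of_nonneg_right h3
            positivity
        _ = Real.sqrt π * (1 / (2 * π)) * Real.exp (-(w ^ 2) / 2) := by ring
    · apply Integrable.const_mul
      have h : ∀ w : ℝ, Real.exp (-(w ^ 2) / 2) = Real.exp (-(1/2 : ℝ) * w ^ 2) := by
        intro w; rw [show -(w ^ 2) / 2 = -(1/2 : ℝ) * w ^ 2 by ring]
      simp_rw [h]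
      exact integrable_exp_neg_mul_sq (by norm_num)
    · filter_upwards [hne] with w hw
      have hw2 : (0:ℝ) < w ^ 2 := by positivity
      have h1 : Tendsto (fun n : ℝ => 1 / (2 * n)) atTop (𝓝 0) :=
        Tendsto.div_atTop tendsto_const_nhds (tendsto_id.const_mul_atTop two_pos)
      have h2 : Tendsto (fun n : ℝ => w ^ 2 + 1 / (2 * n)) atTop (𝓝 (w ^ 2)) := by
        simpa using tendsto_const_nhds.add h1
      have h3 : Tendsto (fun n : ℝ => π / (w ^ 2 + 1 / (2 * n))) atTop (𝓝 (π / w ^ 2)) :=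
        tendsto_const_nhds.div h2 hw2.ne'
      have h4 : Tendsto (fun n : ℝ =>
          |w| * (1 / (2 * π)) * Real.exp (-(w ^ 2) / 2) *
            Real.sqrt (π / (w ^ 2 + 1 / (2 * n)))) atTop
          (𝓝 (|w| * (1 / (2 * π)) * Real.exp (-(w ^ 2) / 2) * Real.sqrt (π / w ^ 2))) :=
        tendsto_const_nhds.mul ((Real.continuous_sqrt.tendsto _).comp h3)
      have hval : |w| * (1 / (2 * π)) * Real.exp (-(w ^ 2) / 2) * Real.sqrt (π / w ^ 2)
          = f w := by
        rw [hf, Real.sqrt_div pi_pos.le, Real.sqrt_sq_eq_abs]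
        have habs : |w| ≠ 0 := abs_ne_zero.mpr hw
        field_simp
      rw [← hval]
      apply Tendsto.congr' ?_ h4
      filter_upwards [eventually_ge_atTop (1:ℝ)] with n hn
      have hn0 : (0:ℝ) < n := by linarith
      have hden : (0:ℝ) < n * w ^ 2 + 1/2 := by positivity
      have hden2 : (0:ℝ) < w ^ 2 + 1 / (2 * n) := by positivity
      simp only [hF]
      rw [← Real.sqrt_eq_rpow]
      have hmul : Real.sqrt n * Real.sqrt (π / (n * w ^ 2 + 1/2))
          = Real.sqrt (π / (w ^ 2 + 1 / (2 * n))) := by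
        rw [← Real.sqrt_mul hn0.le,
          show n * (π / (n * w ^ 2 + 1/2)) = π / (w ^ 2 + 1 / (2 * n)) by
            field_simp]
      rw [← hmul]; ring
  have hint : (∫ w : ℝ, f w) = 1 / Real.sqrt 2 := by
    rw [hf]
    have h : ∀ w : ℝ, Real.exp (-(w ^ 2) / 2) * Real.sqrt π / (2 * π)
        = Real.exp (-(1/2 : ℝ) * w ^ 2) * (Real.sqrt π / (2 * π)) := by
      intro w; rw [show -(w ^ 2) / 2 = -(1/2 : ℝ) * w ^ 2 by ring]; ring
    simp_rw [h]
    rw [MeasureTheory.integral_mul_const, integral_gaussian]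
    have h2 : Real.sqrt (π / (1/2 : ℝ)) = Real.sqrt 2 * Real.sqrt π := by
      rw [show π / (1/2 : ℝ) = 2 * π by ring, Real.sqrt_mul (by norm_num)]
    rw [h2]
    have hπ : Real.sqrt π * Real.sqrt π = π := Real.mul_self_sqrt pi_pos.le
    have h2' : Real.sqrt 2 * Real.sqrt 2 = 2 := Real.mul_self_sqrt (by norm_num)
    have hs2 : Real.sqrt 2 ≠ 0 := by positivity
    have hsπ : Real.sqrt π ≠ 0 := by positivity
    field_simp
    nlinarith [pi_pos]
  rw [← hint]
  apply Tendsto.congr ?_ key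
  intro n
  rw [Z1a_eq n, ← MeasureTheory.integral_const_mul]
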